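/- arXiv:1908.11228 — 2 statements merged into one kernel-verified Lean document; each statement's English description precedes it below -/
import Mathlib

section
/- (Theorem 1, in its Ḣ^{−1}/diaphony form, which bounds the 2-Wasserstein distance of the empirical measure to Lebesgue measure via Peyré's inequality) Let f : 𝕋 → ℝ be continuous, even, with mean value zero, with Fourier coefficients satisfying f̂(k) ≥ c·|k|^{−2} for all k ≠ 0 (for some fixed c > 0) and ∑_{k∈ℤ} f̂(k) < ∞, and let (x_n)_{n≥1} be a greedy sequence for f with initial points x_1, …, x_M. Then there is a constant C > 0, depending only on c, f(0) and the initial points, such that for all n ≥ M, ∑_{k∈ℤ, k≠0} |k|^{−2} · |(1/n)·∑_{m=1}^{n} e^{2πik x_m}|² ≤ C/n. -/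
/-!
The energy `E n = ∑_{j,m ≤ n} f (x_j - x_m)` of a greedy sequence grows at most linearly in `n`:
as `f` has mean zero, some `y` has `∑_{m ≤ n} f (y - x_m) ≤ 0`, the greedy point `x_{n+1}` does no
worse, and by evenness adding it changes the energy by `f 0 + 2 ∑_{m ≤ n} f (x_{n+1} - x_m)`.
Expanding `f` in its absolutely convergent Fourier series gives
`E n = ∑_{k ≠ 0} f̂(k) |∑_{m ≤ n} e(k x_m)|²`, which by `f̂(k) ≥ c k⁻²` dominates `c n²` times the
diaphony sum.
-/

open MeasureTheory ComplexConjugate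

theorem fourier_sub_apply {T : ℝ} (k : ℤ) (a b : AddCircle T) :
    fourier k (a - b) = fourier k a * conj (fourier k b) := by
  rw [← fourier_neg, sub_eq_add_neg, fourier_apply, fourier_apply, fourier_apply, zsmul_add,
    zsmul_neg, neg_zsmul, AddCircle.toCircle_add, Circle.coe_mul]

section PairEnergy

variable {G ι : Type*} [AddGroup G]

def pairEnergy (f : G → ℝ) (x : ι → G) (s : Finset ι) : ℝ :=
  ∑ j ∈ s, ∑ m ∈ s, f (x j - x m)

@[simp]
theorem pairEnergy_empty (f : G → ℝ) (x : ι → G) : pairEnergy f x ∅ = 0 := by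
  simp [pairEnergy]

theorem pairEnergy_insert [DecidableEq ι] {f : G → ℝ} (hf_even : ∀ t, f (-t) = f t)
    (x : ι → G) {s : Finset ι} {i : ι} (hi : i ∉ s) :
    pairEnergy f x (insert i s) = pairEnergy f x s + f 0 + 2 * ∑ m ∈ s, f (x i - x m) := by
  have hswap : ∀ j, f (x j - x i) = f (x i - x j) := fun j => by rw [← hf_even, neg_sub]
  simp only [pairEnergy, Finset.sum_insert hi, Finset.sum_add_distrib, hswap, sub_self]
  ring

end PairEnergy

variable {T : ℝ} [Fact (0 < T)] {ι : Type*}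

theorem fourierCoeff_ofReal_zero_eq_zero {f : AddCircle T → ℝ} (hf_mean : ∫ t, f t = 0) :
    fourierCoeff (fun t => (f t : ℂ)) 0 = 0 := by
  simp only [fourierCoeff, neg_zero, fourier_zero, one_smul, AddCircle.integral_haarAddCircle,
    integral_complex_ofReal, hf_mean, Complex.ofReal_zero, smul_zero]

theorem exists_sum_translate_nonpos {f : AddCircle T → ℝ} (hf_cont : Continuous f)
    (hf_mean : ∫ t, f t = 0) (s : Finset ι) (x : ι → AddCircle T) :
    ∃ y, ∑ m ∈ s, f (y - x m) ≤ 0 := by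
  have hcont : Continuous fun y => ∑ m ∈ s, f (y - x m) := by fun_prop
  have hint : ∫ y, ∑ m ∈ s, f (y - x m) = 0 := by
    rw [integral_finsetSum]
    · simp only [integral_sub_right_eq_self, hf_mean, Finset.sum_const_zero]
    · exact fun m _ => (hf_cont.comp (continuous_sub_right (x m))).integrable_of_hasCompactSupport
        (HasCompactSupport.of_compactSpace _)
  obtain ⟨y, hy⟩ := exists_le_average (NeZero.ne volume)
    (hcont.integrable_of_hasCompactSupport (HasCompactSupport.of_compactSpace _))
  exact ⟨y, by rwa [average_eq, hint, smul_zero] at hy⟩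

theorem pairEnergy_insert_le_of_greedy [DecidableEq ι] {f : AddCircle T → ℝ}
    (hf_cont : Continuous f) (hf_even : ∀ t, f (-t) = f t) (hf_mean : ∫ t, f t = 0)
    (x : ι → AddCircle T) {s : Finset ι} {i : ι} (hi : i ∉ s)
    (hgreedy : ∀ y, ∑ m ∈ s, f (x i - x m) ≤ ∑ m ∈ s, f (y - x m)) :
    pairEnergy f x (insert i s) ≤ pairEnergy f x s + f 0 := by
  obtain ⟨y, hy⟩ := exists_sum_translate_nonpos hf_cont hf_mean s x
  rw [pairEnergy_insert hf_even x hi]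
  linarith [hgreedy y]

theorem hasSum_fourierCoeff_re_mul_norm_sq {f : AddCircle T → ℝ} (hf_cont : Continuous f)
    (hf_sum : Summable fun k : ℤ => ‖fourierCoeff (fun t => (f t : ℂ)) k‖)
    (s : Finset ι) (x : ι → AddCircle T) :
    HasSum (fun k : ℤ => (fourierCoeff (fun t => (f t : ℂ)) k).re *
      ‖∑ m ∈ s, fourier k (x m)‖ ^ 2) (pairEnergy f x s) := by
  set F := fourierCoeff (fun t => (f t : ℂ))
  let g : C(AddCircle T, ℂ) := ⟨fun t => (f t : ℂ), by fun_prop⟩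
  have hpoint (t : AddCircle T) : HasSum (fun k => F k * fourier k t) (f t : ℂ) :=
    has_pointwise_sum_fourier_series_of_summable (f := g) hf_sum.of_norm t
  have hC : HasSum (fun k => F k * ((‖∑ m ∈ s, fourier k (x m)‖ ^ 2 : ℝ) : ℂ))
      (pairEnergy f x s : ℂ) := by
    convert hasSum_sum fun j (_ : j ∈ s) => hasSum_sum fun m (_ : m ∈ s) => hpoint (x j - x m)
      using 1
    · ext k
      rw [Complex.ofReal_pow, ← Complex.mul_conj', map_sum, Finset.sum_mul_sum, Finset.mul_sum]
      simp only [Finset.mul_sum, fourier_sub_apply]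
    · simp [pairEnergy]
  simpa only [Complex.reCLM_apply, Complex.re_mul_ofReal, Complex.ofReal_re] using
    Complex.reCLM.hasSum hC

theorem tsum_inv_sq_mul_norm_sq_le {f : AddCircle T → ℝ} (hf_cont : Continuous f)
    (hf_mean : ∫ t, f t = 0)
    (hf_sum : Summable fun k : ℤ => ‖fourierCoeff (fun t => (f t : ℂ)) k‖)
    {c : ℝ} (hc : 0 < c)
    (hf_lb : ∀ k : ℤ, k ≠ 0 → c / (k : ℝ) ^ 2 ≤ (fourierCoeff (fun t => (f t : ℂ)) k).re)
    (s : Finset ι) (x : ι → AddCircle T) :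
    ∑' k : {k : ℤ // k ≠ 0}, 1 / (k : ℝ) ^ 2 * ‖∑ m ∈ s, fourier (k : ℤ) (x m)‖ ^ 2
      ≤ pairEnergy f x s / c := by
  set F := fourierCoeff (fun t => (f t : ℂ))
  have hsupp : Function.support (fun k : ℤ => (F k).re * ‖∑ m ∈ s, fourier k (x m)‖ ^ 2)
      ⊆ {k | k ≠ 0} := by
    rintro k hk rfl
    simp [F, fourierCoeff_ofReal_zero_eq_zero hf_mean] at hk
  have hE := ((hasSum_subtype_iff_of_support_subset hsupp).mpr
    (hasSum_fourierCoeff_re_mul_norm_sq hf_cont hf_sum s x)).div_const c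
  have hle (k : {k : ℤ // k ≠ 0}) : 1 / (k : ℝ) ^ 2 * ‖∑ m ∈ s, fourier (k : ℤ) (x m)‖ ^ 2
      ≤ (F k).re * ‖∑ m ∈ s, fourier (k : ℤ) (x m)‖ ^ 2 / c := by
    rw [le_div_iff₀ hc, mul_right_comm, one_div_mul_eq_div]
    exact mul_le_mul_of_nonneg_right (hf_lb k k.2) (by positivity)
  exact hasSum_le hle (hE.summable.of_nonneg_of_le (fun _ => by positivity) hle).hasSum hE

theorem le_add_mul_of_forall_le_add {E : ℕ → ℝ} {d : ℝ} {M : ℕ}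
    (h : ∀ n, M ≤ n → E (n + 1) ≤ E n + d) : ∀ n, M ≤ n → E n ≤ E M + ((n : ℝ) - M) * d := by
  intro n hn
  induction n, hn using Nat.le_induction with
  | base => simp
  | succ n hn ih => push_cast; linarith [h n hn]

theorem diaphony_bound_general
    (f : UnitAddCircle → ℝ) (hf_cont : Continuous f)
    (hf_even : ∀ t : UnitAddCircle, f (-t) = f t)
    (hf_mean : (∫ t : UnitAddCircle, f t) = 0)
    (hf_sum : Summable fun k : ℤ => ‖fourierCoeff (fun t => (f t : ℂ)) k‖)
    (c : ℝ) (hc : 0 < c)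
    (hf_lb : ∀ k : ℤ, k ≠ 0 → c / (k : ℝ) ^ 2 ≤ (fourierCoeff (fun t => (f t : ℂ)) k).re)
    (M : ℕ) (x : ℕ → UnitAddCircle)
    (hgreedy : ∀ n : ℕ, M < n → ∀ y : UnitAddCircle,
      ∑ k ∈ Finset.Icc 1 (n - 1), f (x n - x k) ≤ ∑ k ∈ Finset.Icc 1 (n - 1), f (y - x k)) :
    ∃ C > 0, ∀ n : ℕ, M ≤ n →
      (∑' k : {k : ℤ // k ≠ 0}, (1 : ℝ) / ((k : ℤ) : ℝ) ^ 2 *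
          ‖(1 / (n : ℂ)) * ∑ m ∈ Finset.Icc 1 n, fourier (k : ℤ) (x m)‖ ^ 2)
        ≤ C / n := by
  have : Fact ((0 : ℝ) < 1) := ⟨one_pos⟩
  set E : ℕ → ℝ := fun n => pairEnergy f x (Finset.Icc 1 n)
  have hstep (n : ℕ) (hn : M ≤ n) : E (n + 1) ≤ E n + f 0 := by
    simp only [E, ← Finset.insert_Icc_right_eq_Icc_add_one (Nat.le_add_left 1 n)]
    exact pairEnergy_insert_le_of_greedy hf_cont hf_even hf_mean x (by simp)
      (by simpa using hgreedy (n + 1) (Nat.lt_succ_of_le hn))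
  set K := |E M| + |f 0| + 1
  have hlinear (n : ℕ) (hn : M ≤ n) : E n ≤ K * n := by
    rcases Nat.eq_zero_or_pos n with rfl | hpos
    · simp [E]
    · have h1 : (1 : ℝ) ≤ n := by exact_mod_cast hpos
      have := le_add_mul_of_forall_le_add hstep n hn
      nlinarith [le_abs_self (E M), le_abs_self (f 0), abs_nonneg (E M), abs_nonneg (f 0),
        (Nat.cast_le (α := ℝ)).2 hn]
  refine ⟨K / c, by positivity, fun n hn => ?_⟩
  simp_rw [norm_mul, mul_pow, mul_left_comm _ (‖1 / (n : ℂ)‖ ^ 2)]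
  rw [tsum_mul_left]
  calc ‖1 / (n : ℂ)‖ ^ 2 * ∑' k : {k : ℤ // k ≠ 0}, 1 / (k : ℝ) ^ 2 *
        ‖∑ m ∈ Finset.Icc 1 n, fourier (k : ℤ) (x m)‖ ^ 2
      ≤ ‖1 / (n : ℂ)‖ ^ 2 * (K * n / c) := by
        gcongr
        exact (tsum_inv_sq_mul_norm_sq_le hf_cont hf_mean hf_sum hc hf_lb _ x).trans
          (div_le_div_of_nonneg_right (hlinear n hn) hc.le)
    _ = K / c / n := by
        -- at `n = 0` both sides are `0`, since `1 / 0 = 0`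
        rcases Nat.eq_zero_or_pos n with rfl | hpos
        · simp
        · simp only [one_div, norm_inv, Complex.norm_natCast]
          field_simp

/-- Theorem 1, Ḣ^{−1}/diaphony form: For continuous even mean-zero
`f : 𝕋 → ℝ` with summable Fourier coefficients satisfying `f̂(k) ≥ c·|k|^{−2}` for
`k ≠ 0`, and a greedy sequence `(x_n)` for `f`, there is `C > 0` such that for all
`n ≥ M`, `∑_{k≠0} |k|^{−2} · |(1/n)·∑_{m=1}^{n} e^{2πik x_m}|² ≤ C/n`. -/
theorem diaphony_bound
    (f : UnitAddCircle → ℝ) (hf_cont : Continuous f)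
    (hf_even : ∀ t : UnitAddCircle, f (-t) = f t)
    (hf_mean : (∫ t : UnitAddCircle, f t) = 0)
    (hf_sum : Summable fun k : ℤ => ‖fourierCoeff (fun t => (f t : ℂ)) k‖)
    (c : ℝ) (hc : 0 < c)
    (hf_lb : ∀ k : ℤ, k ≠ 0 → c / (k : ℝ) ^ 2 ≤ (fourierCoeff (fun t => (f t : ℂ)) k).re)
    (M : ℕ) (hM : 1 ≤ M) (x : ℕ → UnitAddCircle)
    (hgreedy : ∀ n : ℕ, M < n → ∀ y : UnitAddCircle,
      ∑ k ∈ Finset.Icc 1 (n - 1), f (x n - x k) ≤ ∑ k ∈ Finset.Icc 1 (n - 1), f (y - x k)) :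
    ∃ C > 0, ∀ n : ℕ, M ≤ n →
      (∑' k : {k : ℤ // k ≠ 0}, (1 : ℝ) / ((k : ℤ) : ℝ) ^ 2 *
          ‖(1 / (n : ℂ)) * ∑ m ∈ Finset.Icc 1 n, fourier (k : ℤ) (x m)‖ ^ 2)
        ≤ C / n :=
  diaphony_bound_general f hf_cont hf_even hf_mean hf_sum c hc hf_lb M x hgreedy
end

section
/- (Lemma) Let f : 𝕋 → ℝ be continuous, even, with mean value zero and f(0) > 0, with Fourier coefficients satisfying f̂(k) ≥ 0 for all k ≠ 0 and ∑_{k∈ℤ} f̂(k) < ∞, and let (x_n)_{n≥1} be a greedy sequence for f with initial points x_1, …, x_M. Then ∫₀¹ |∑_{k=1}^{n} f(x − x_k)| dx ≤ 2·f(0) holds for infinitely many n. -/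
/-!
Let `F_n(y) = ∑_{k ≤ n} f(y - x_k)` and `E_n = ∑_{j,k ≤ n} f(x_j - x_k)`. Expanding `f` in its
Fourier series gives `E_n = ∑_m f̂(m) |∑_{j ≤ n} e(m x_j)|² ≥ 0`. Since `F_n` has mean zero and
`x_{n+1}` minimises it, `∫ |F_n| ≤ -2 F_n(x_{n+1})`, while evenness of `f` gives
`E_{n+1} = E_n + 2 F_n(x_{n+1}) + f(0)`. If `∫ |F_n| > 2 f(0)` for all large `n`, then `E_n`
would decrease by more than `f(0) > 0` at every step, contradicting `E_n ≥ 0`.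
-/

open MeasureTheory Filter Finset
open scoped ComplexConjugate

section Fourier

variable {T : ℝ}

theorem fourier_apply_sub (m : ℤ) (a b : AddCircle T) :
    fourier m (a - b) = fourier m a * conj (fourier m b) := by
  rw [sub_eq_add_neg, ← fourier_neg, fourier_apply, fourier_apply, fourier_apply, smul_add,
    neg_smul, smul_neg, AddCircle.toCircle_add, Circle.coe_mul, ← neg_smul]

variable {ι : Type*} (s : Finset ι) (x : ι → AddCircle T)

theorem sum_sum_fourier_sub (m : ℤ) :
    ∑ j ∈ s, ∑ k ∈ s, fourier m (x j - x k) = Complex.normSq (∑ j ∈ s, fourier m (x j)) := by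
  simp_rw [fourier_apply_sub, ← mul_sum, ← sum_mul, ← map_sum, Complex.mul_conj]

variable [Fact (0 < T)]

theorem fourierCoeff_zero_of_integral_eq_zero {f : AddCircle T → ℂ} (hf : ∫ t, f t = 0) :
    fourierCoeff f 0 = 0 := by
  simp [fourierCoeff, AddCircle.integral_haarAddCircle, hf]

theorem hasSum_sum_sum_apply_sub {f : C(AddCircle T, ℂ)} (hf : Summable (fourierCoeff f)) :
    HasSum (fun m : ℤ => fourierCoeff f m * Complex.normSq (∑ j ∈ s, fourier m (x j)))
      (∑ j ∈ s, ∑ k ∈ s, f (x j - x k)) := by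
  simp_rw [← sum_sum_fourier_sub, mul_sum, ← smul_eq_mul]
  exact hasSum_sum fun j _ => hasSum_sum fun k _ =>
    has_pointwise_sum_fourier_series_of_summable hf (x j - x k)

theorem sum_sum_apply_sub_nonneg {f : AddCircle T → ℝ} (hf : Continuous f)
    (hsum : Summable (fourierCoeff fun t => (f t : ℂ)))
    (hpos : ∀ m, 0 ≤ (fourierCoeff (fun t => (f t : ℂ)) m).re) :
    0 ≤ ∑ j ∈ s, ∑ k ∈ s, f (x j - x k) := by
  let g : C(AddCircle T, ℂ) := ⟨fun t => f t, by fun_prop⟩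
  have h := (hasSum_sum_sum_apply_sub s x (f := g) hsum).mapL Complex.reCLM
  simp only [Complex.reCLM_apply, Complex.re_mul_ofReal, Complex.re_sum] at h
  exact h.nonneg fun m => mul_nonneg (hpos m) (Complex.normSq_nonneg _)

end Fourier

theorem sum_sum_insert_apply_sub {G ι : Type*} [AddCommGroup G] [DecidableEq ι] {f : G → ℝ}
    (hf : ∀ t, f (-t) = f t) (x : ι → G) {s : Finset ι} {a : ι} (ha : a ∉ s) :
    ∑ j ∈ insert a s, ∑ k ∈ insert a s, f (x j - x k) =
      ∑ j ∈ s, ∑ k ∈ s, f (x j - x k) + 2 * ∑ k ∈ s, f (x a - x k) + f 0 := by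
  have hsymm : ∑ j ∈ s, f (x j - x a) = ∑ k ∈ s, f (x a - x k) :=
    sum_congr rfl fun j _ => by rw [← hf, neg_sub]
  simp only [sum_insert ha, sum_add_distrib, hsymm, sub_self]
  ring

theorem integral_abs_le_neg_two_mul {X : Type*} [MeasurableSpace X] {μ : Measure X}
    [IsProbabilityMeasure μ] {g : X → ℝ} {c : ℝ} (hg : Integrable g μ) (hg0 : ∫ t, g t ∂μ = 0)
    (hc : ∀ t, c ≤ g t) : ∫ t, |g t| ∂μ ≤ -2 * c := by
  have hc0 : c ≤ 0 := by
    simpa [hg0] using integral_mono (integrable_const c) hg hc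
  calc ∫ t, |g t| ∂μ ≤ ∫ t, (g t - 2 * c) ∂μ :=
        integral_mono hg.abs (hg.sub (integrable_const _)) fun t => by
          rcases abs_cases (g t) with ⟨h, -⟩ | ⟨h, -⟩ <;> linarith [hc t]
    _ = -2 * c := by simp [integral_sub hg (integrable_const _), hg0]

theorem frequently_sub_le_succ_of_nonneg {E : ℕ → ℝ} {c : ℝ} (hc : 0 < c) (hE : ∀ n, 0 ≤ E n) :
    ∃ᶠ n in atTop, E n - c ≤ E (n + 1) := by
  by_contra h
  obtain ⟨N, hN⟩ := eventually_atTop.mp (not_frequently.mp h)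
  have hdesc : ∀ j : ℕ, E (N + j) ≤ E N - j * c := by
    intro j
    induction j with
    | zero => simp
    | succ j ih =>
      have := not_le.mp (hN (N + j) (by omega))
      rw [← add_assoc]
      push_cast
      linarith
  obtain ⟨j, hj⟩ := exists_nat_gt (E N / c)
  rw [div_lt_iff₀ hc] at hj
  linarith [hdesc j, hE (N + j)]

instance : IsProbabilityMeasure (volume : Measure UnitAddCircle) :=
  ⟨UnitAddCircle.measure_univ⟩

theorem L1_small_infinitely_often_general
    (f : UnitAddCircle → ℝ) (hf_cont : Continuous f)
    (hf_even : ∀ t : UnitAddCircle, f (-t) = f t)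
    (hf_mean : (∫ t : UnitAddCircle, f t) = 0)
    (hf0 : 0 < f 0)
    (hf_sum : Summable fun k : ℤ => ‖fourierCoeff (fun t => (f t : ℂ)) k‖)
    (hf_pos : ∀ k : ℤ, k ≠ 0 → 0 ≤ (fourierCoeff (fun t => (f t : ℂ)) k).re)
    (M : ℕ) (x : ℕ → UnitAddCircle)
    (hgreedy : ∀ n : ℕ, M < n → ∀ y : UnitAddCircle,
      ∑ k ∈ Finset.Icc 1 (n - 1), f (x n - x k) ≤ ∑ k ∈ Finset.Icc 1 (n - 1), f (y - x k)) :
    ∃ᶠ n in atTop, (∫ t : UnitAddCircle, |∑ k ∈ Finset.Icc 1 n, f (t - x k)|) ≤ 2 * f 0 := by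
  set F : ℕ → UnitAddCircle → ℝ := fun n y => ∑ k ∈ Icc 1 n, f (y - x k)
  set E : ℕ → ℝ := fun n => ∑ j ∈ Icc 1 n, ∑ k ∈ Icc 1 n, f (x j - x k)
  have hcoeff_zero : fourierCoeff (fun t => (f t : ℂ)) 0 = 0 :=
    fourierCoeff_zero_of_integral_eq_zero (by exact_mod_cast hf_mean)
  have hE_nonneg : ∀ n, 0 ≤ E n := fun n =>
    sum_sum_apply_sub_nonneg _ x hf_cont (.of_norm hf_sum) fun m => by
      rcases eq_or_ne m 0 with rfl | hm
      · simp [hcoeff_zero]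
      · exact hf_pos m hm
  have hE_succ : ∀ n, E (n + 1) = E n + 2 * F n (x (n + 1)) + f 0 := fun n => by
    simp only [E, F, ← insert_Icc_right_eq_Icc_add_one (Nat.le_add_left 1 n)]
    exact sum_sum_insert_apply_sub hf_even x (by simp)
  have hf_shift_integrable : ∀ a, Integrable fun t => f (t - a) := fun a =>
    (hf_cont.comp (continuous_sub_right a)).integrable_of_hasCompactSupport (.of_compactSpace _)
  have hF_integral : ∀ n, ∫ t, F n t = 0 := fun n => by
    simp [F, integral_finsetSum _ fun k _ => hf_shift_integrable (x k), integral_sub_right_eq_self,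
      hf_mean]
  have hF_L1 : ∀ n, M ≤ n → ∫ t, |F n t| ≤ -2 * F n (x (n + 1)) := fun n hn =>
    integral_abs_le_neg_two_mul
      (integrable_finsetSum _ fun k _ => hf_shift_integrable (x k)) (hF_integral n) fun y => by
      simpa using hgreedy (n + 1) (by omega) y
  refine (frequently_sub_le_succ_of_nonneg hf0 hE_nonneg).mp ?_
  filter_upwards [eventually_ge_atTop M] with n hn hstep
  linarith [hF_L1 n hn, hE_succ n]

/-- Lemma: For continuous even mean-zero `f : 𝕋 → ℝ` with `f(0) > 0`,
summable Fourier coefficients and `f̂(k) ≥ 0` for `k ≠ 0`, and a greedy sequence `(x_n)`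
for `f`, we have `∫₀¹ |∑_{k=1}^{n} f(x − x_k)| dx ≤ 2·f(0)` for infinitely many `n`. -/
theorem L1_small_infinitely_often
    (f : UnitAddCircle → ℝ) (hf_cont : Continuous f)
    (hf_even : ∀ t : UnitAddCircle, f (-t) = f t)
    (hf_mean : (∫ t : UnitAddCircle, f t) = 0)
    (hf0 : 0 < f 0)
    (hf_sum : Summable fun k : ℤ => ‖fourierCoeff (fun t => (f t : ℂ)) k‖)
    (hf_pos : ∀ k : ℤ, k ≠ 0 → 0 ≤ (fourierCoeff (fun t => (f t : ℂ)) k).re)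
    (M : ℕ) (hM : 1 ≤ M) (x : ℕ → UnitAddCircle)
    (hgreedy : ∀ n : ℕ, M < n → ∀ y : UnitAddCircle,
      ∑ k ∈ Finset.Icc 1 (n - 1), f (x n - x k) ≤ ∑ k ∈ Finset.Icc 1 (n - 1), f (y - x k)) :
    ∃ᶠ n in atTop, (∫ t : UnitAddCircle, |∑ k ∈ Finset.Icc 1 n, f (t - x k)|) ≤ 2 * f 0 :=
  L1_small_infinitely_often_general f hf_cont hf_even hf_mean hf0 hf_sum hf_pos M x hgreedy
end
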